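/- There exists a function g : ℕ × ℕ → ℕ such that for all positive integers ℓ and d, if a finite matroid M has at least g(ℓ,d) distinct circuits of size ℓ, then M has a collection of d pairwise disjoint circuits. -/

import Mathlib

open Set

/-- A circuit of a matroid: a minimal dependent set. -/
def IsCircuit {α : Type*} (M : Matroid α) (C : Set α) : Prop :=
  M.Dep C ∧ ∀ D, D ⊂ C → ¬ M.Dep D

universe u

/-!
Induction on `ℓ`, for all matroids at once. Let `F` be a large family of circuits of size at
most `ℓ + 1` and `t = g(ℓ, 2d)`. If some element `e` lies in more than `t` members of `F`, removing
`e` from them gives more than `t` distinct circuits of `M ／ e` of size at most `ℓ`, hence `2d`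
pairwise disjoint ones by induction. The union of two disjoint circuits of `M ／ e` contains a
circuit of `M` (lift both to circuits of `M` and eliminate `e`), so pairing them up yields `d`
disjoint circuits of `M`. Otherwise every element lies in at most `t` members of `F`, so each
member meets at most `(ℓ + 1) t` others and `d` disjoint members can be chosen greedily.
-/

open Finset

lemma isCircuit_iff_matroid_isCircuit {α : Type*} {M : Matroid α} {C : Set α} :
    IsCircuit M C ↔ M.IsCircuit C := by
  rw [Matroid.isCircuit_def, minimal_iff_forall_ssubset]
  rfl

namespace Finset

variable {α : Type*}

open Classical in
lemma exists_pairwiseDisjoint_subset_of_card_filter_mem_le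
    {s t : ℕ} (d : ℕ) {F : Finset (Set α)} (hF₀ : ∅ ∉ F) (hs : ∀ C ∈ F, C.encard ≤ s)
    (ht : ∀ x, #{C ∈ F | x ∈ C} ≤ t) (hF : d * (s * t) < #F) :
    ∃ 𝒞 ⊆ F, #𝒞 = d ∧ (𝒞 : Set (Set α)).PairwiseDisjoint id := by
  induction d generalizing F with
  | zero => exact ⟨∅, empty_subset _, rfl, by simp⟩
  | succ d ih =>
    obtain ⟨C₀, hC₀⟩ := card_pos.mp (by omega : 0 < #F)
    have hC₀fin : C₀.Finite := finite_of_encard_le_coe (hs C₀ hC₀)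
    have hmeet : #{C ∈ F | ¬ Disjoint C₀ C} ≤ s * t := by
      calc #{C ∈ F | ¬ Disjoint C₀ C}
          ≤ #(hC₀fin.toFinset.biUnion fun x ↦ {C ∈ F | x ∈ C}) := by
            refine card_le_card fun C hC ↦ ?_
            obtain ⟨hCF, hC₀C⟩ := mem_filter.mp hC
            obtain ⟨x, hx₀, hx⟩ := Set.not_disjoint_iff.mp hC₀C
            exact mem_biUnion.mpr ⟨x, hC₀fin.mem_toFinset.mpr hx₀, mem_filter.mpr ⟨hCF, hx⟩⟩
        _ ≤ #hC₀fin.toFinset * t := card_biUnion_le_card_mul _ _ _ fun x _ ↦ ht x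
        _ ≤ s * t := by
            gcongr
            exact_mod_cast hC₀fin.encard_eq_coe_toFinset_card ▸ hs C₀ hC₀
    have hF' : d * (s * t) < #{C ∈ F | Disjoint C₀ C} := by
      have := card_filter_add_card_filter_not (s := F) fun C ↦ Disjoint C₀ C
      rw [add_mul] at hF
      omega
    obtain ⟨𝒞, h𝒞F', h𝒞card, h𝒞⟩ := ih (fun h ↦ hF₀ (filter_subset _ _ h))
      (fun C hC ↦ hs C (filter_subset _ _ hC))
      (fun x ↦ (card_le_card (filter_subset_filter _ (filter_subset _ _))).trans (ht x)) hF'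
    have hC₀𝒞 : ∀ C ∈ 𝒞, Disjoint C₀ C := fun C hC ↦ (mem_filter.mp (h𝒞F' hC)).2
    have hC₀not : C₀ ∉ 𝒞 := fun h ↦ hF₀ (disjoint_self.mp (hC₀𝒞 C₀ h) ▸ hC₀ :)
    refine ⟨insert C₀ 𝒞, insert_subset hC₀ (h𝒞F'.trans (filter_subset _ _)), ?_, ?_⟩
    · rw [card_insert_of_notMem hC₀not, h𝒞card]
    · rw [coe_insert]
      exact h𝒞.insert fun C hC _ ↦ hC₀𝒞 C hC

lemma exists_pairwiseDisjoint_of_forall_exists_subset_union {P : Set α → Prop} (hP₀ : ¬ P ∅)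
    (d : ℕ) {𝒟 : Finset (Set α)} (h𝒟 : (𝒟 : Set (Set α)).PairwiseDisjoint id)
    (hcard : 2 * d ≤ #𝒟) (hP : ∀ D₁ ∈ 𝒟, ∀ D₂ ∈ 𝒟, D₁ ≠ D₂ → ∃ C ⊆ D₁ ∪ D₂, P C) :
    ∃ 𝒞 : Finset (Set α), #𝒞 = d ∧ (∀ C ∈ 𝒞, P C) ∧ (𝒞 : Set (Set α)).PairwiseDisjoint id := by
  classical
  induction d generalizing P 𝒟 with
  | zero => exact ⟨∅, rfl, by simp, by simp⟩
  | succ d ih =>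
    obtain ⟨D₁, hD₁, D₂, hD₂, hD₁₂⟩ := one_lt_card.mp (by omega : 1 < #𝒟)
    obtain ⟨C, hC, hPC⟩ := hP D₁ hD₁ D₂ hD₂ hD₁₂
    set 𝒟' := (𝒟.erase D₁).erase D₂
    have h𝒟'𝒟 : 𝒟' ⊆ 𝒟 := (erase_subset _ _).trans (erase_subset _ _)
    have hdisj : ∀ D ∈ 𝒟', Disjoint (D₁ ∪ D₂) D := by
      intro D hD
      obtain ⟨hD2, hD1, hD⟩ : D ≠ D₂ ∧ D ≠ D₁ ∧ D ∈ 𝒟 := by simpa [𝒟'] using hD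
      exact Set.disjoint_union_left.mpr ⟨h𝒟 hD₁ hD hD1.symm, h𝒟 hD₂ hD hD2.symm⟩
    have hcard' : 2 * d ≤ #𝒟' := by
      rw [card_erase_of_mem (mem_erase.mpr ⟨hD₁₂.symm, hD₂⟩), card_erase_of_mem hD₁]
      omega
    obtain ⟨𝒞, h𝒞card, h𝒞P, h𝒞⟩ := ih (P := fun C ↦ P C ∧ Disjoint (D₁ ∪ D₂) C)
      (fun h ↦ hP₀ h.1) (h𝒟.subset (by exact_mod_cast h𝒟'𝒟)) hcard'
      fun D hD D' hD' hDD' ↦ by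
        obtain ⟨C', hC', hPC'⟩ := hP D (h𝒟'𝒟 hD) D' (h𝒟'𝒟 hD') hDD'
        have hdisj' := Set.disjoint_union_right.mpr ⟨hdisj D hD, hdisj D' hD'⟩
        exact ⟨C', hC', hPC', hdisj'.mono_right hC'⟩
    have hC𝒞 : ∀ C' ∈ 𝒞, Disjoint C C' := fun C' hC' ↦ (h𝒞P C' hC').2.mono_left hC
    have hCnot : C ∉ 𝒞 := fun h ↦ hP₀ (disjoint_self.mp (hC𝒞 C h) ▸ hPC :)
    refine ⟨insert C 𝒞, ?_, ?_, ?_⟩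
    · rw [card_insert_of_notMem hCnot, h𝒞card]
    · simpa [hPC] using fun C' hC' ↦ (h𝒞P C' hC').1
    · rw [coe_insert]
      exact h𝒞.insert fun C' hC' _ ↦ hC𝒞 C' hC'

end Finset

namespace Matroid

variable {α : Type*} {M : Matroid α} {e : α}

lemma IsCircuit.nontrivial_of_mem_of_ne {C C' : Set α} (hC : M.IsCircuit C)
    (hC' : M.IsCircuit C') (hne : C ≠ C') (heC : e ∈ C) (heC' : e ∈ C') : C.Nontrivial := by
  refine (Set.not_subsingleton_iff.mp fun hsub ↦ hne ?_)
  rw [hsub.eq_singleton_of_mem heC] at hC ⊢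
  exact hC.eq_of_subset_isCircuit hC' (singleton_subset_iff.mpr heC')

lemma exists_isCircuits_contractElem {ℓ : ℕ} {F : Finset (Set α)}
    (hF : ∀ C ∈ F, M.IsCircuit C) (hℓ : ∀ C ∈ F, C.encard ≤ ℓ + 1) (he : ∀ C ∈ F, e ∈ C)
    (hF₁ : 1 < #F) :
    ∃ F' : Finset (Set α), #F' = #F ∧ (∀ D ∈ F', (M ／ {e}).IsCircuit D) ∧
      ∀ D ∈ F', D.encard ≤ ℓ := by
  classical
  have hinj : Set.InjOn (· \ {e} : Set α → Set α) F := fun C hC C' hC' h ↦ by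
    rw [← insert_sdiff_self_of_mem (he C hC), ← insert_sdiff_self_of_mem (he C' hC')]
    exact congrArg (insert e) h
  refine ⟨F.image (· \ {e}), card_image_of_injOn hinj, ?_, ?_⟩
  · simp only [Finset.mem_image, forall_exists_index, and_imp, forall_apply_eq_imp_iff₂]
    intro C hC
    obtain ⟨C', hC', hne⟩ := exists_mem_ne hF₁ C
    exact (hF C hC).contractElem_isCircuit
      ((hF C hC).nontrivial_of_mem_of_ne (hF C' hC') hne.symm (he C hC) (he C' hC')) (he C hC)
  · simp only [Finset.mem_image, forall_exists_index, and_imp, forall_apply_eq_imp_iff₂]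
    intro C hC
    rw [← ENat.add_le_add_iff_right ENat.one_ne_top, encard_sdiff_singleton_add_one (he C hC)]
    exact hℓ C hC

lemma exists_isCircuit_subset_union_of_contractElem {D₁ D₂ : Set α}
    (h₁ : (M ／ {e}).IsCircuit D₁) (h₂ : (M ／ {e}).IsCircuit D₂) (hdj : Disjoint D₁ D₂) :
    ∃ C ⊆ D₁ ∪ D₂, M.IsCircuit C := by
  obtain ⟨C₁, hC₁, hD₁C₁, hC₁D₁⟩ := h₁.exists_subset_isCircuit_of_contract
  obtain ⟨C₂, hC₂, -, hC₂D₂⟩ := h₂.exists_subset_isCircuit_of_contract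
  have hne : C₁ ≠ C₂ := by
    rintro rfl
    obtain ⟨x, hx⟩ := h₁.nonempty
    rcases hC₂D₂ (hD₁C₁ hx) with hx₂ | rfl
    · exact hdj.notMem_of_mem_left hx hx₂
    · exact (h₁.subset_ground hx).2 rfl
  obtain ⟨C, hC, hCcirc⟩ := hC₁.elimination hC₂ hne e
  refine ⟨C, hC.trans ?_, hCcirc⟩
  rintro x ⟨hx | hx, hxe⟩
  · exact .inl ((hC₁D₁ hx).resolve_right hxe)
  · exact .inr ((hC₂D₂ hx).resolve_right hxe)

def circuitPackingBound : ℕ → ℕ → ℕ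
  | 0, _ => 1
  | ℓ + 1, d => d * ((ℓ + 1) * circuitPackingBound ℓ (2 * d)) + 1

lemma one_le_circuitPackingBound (ℓ d : ℕ) : 1 ≤ circuitPackingBound ℓ d := by
  cases ℓ <;> simp [circuitPackingBound]

theorem exists_pairwiseDisjoint_isCircuits (ℓ d : ℕ) {M : Matroid α} {F : Finset (Set α)}
    (hF : ∀ C ∈ F, M.IsCircuit C) (hℓ : ∀ C ∈ F, C.encard ≤ ℓ)
    (hcard : circuitPackingBound ℓ d ≤ #F) :
    ∃ 𝒞 : Finset (Set α), #𝒞 = d ∧ (∀ C ∈ 𝒞, M.IsCircuit C) ∧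
      (𝒞 : Set (Set α)).PairwiseDisjoint id := by
  classical
  induction ℓ generalizing d M F with
  | zero =>
    obtain ⟨C, hC⟩ := card_pos.mp hcard
    have hC₀ : C = ∅ := encard_eq_zero.mp (nonpos_iff_eq_zero.mp (hℓ C hC))
    exact (M.empty_not_isCircuit (hC₀ ▸ hF C hC)).elim
  | succ ℓ ih =>
    by_cases he : ∃ e, circuitPackingBound ℓ (2 * d) < #{C ∈ F | e ∈ C}
    · obtain ⟨e, he⟩ := he
      obtain ⟨F', hF'card, hF', hF'ℓ⟩ := exists_isCircuits_contractElem (F := {C ∈ F | e ∈ C})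
        (fun C hC ↦ hF C (filter_subset _ _ hC)) (fun C hC ↦ hℓ C (filter_subset _ _ hC))
        (fun C hC ↦ (mem_filter.mp hC).2) ((one_le_circuitPackingBound ℓ (2 * d)).trans_lt he)
      obtain ⟨𝒟, h𝒟card, h𝒟, h𝒟disj⟩ := ih (2 * d) hF' hF'ℓ (hF'card ▸ he.le)
      exact exists_pairwiseDisjoint_of_forall_exists_subset_union M.empty_not_isCircuit d
        h𝒟disj h𝒟card.ge fun D₁ h₁ D₂ h₂ hne ↦
          exists_isCircuit_subset_union_of_contractElem (h𝒟 D₁ h₁) (h𝒟 D₂ h₂) (h𝒟disj h₁ h₂ hne)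
    · push Not at he
      obtain ⟨𝒞, h𝒞F, h𝒞card, h𝒞⟩ := exists_pairwiseDisjoint_subset_of_card_filter_mem_le d
        (fun h ↦ M.empty_not_isCircuit (hF ∅ h)) hℓ he hcard
      exact ⟨𝒞, h𝒞card, fun C hC ↦ hF C (h𝒞F hC), h𝒞⟩

end Matroid

theorem statement3 :
    ∃ g : ℕ × ℕ → ℕ, ∀ ℓ d : ℕ, 0 < ℓ → 0 < d →
      ∀ {α : Type u} (M : Matroid α), M.E.Finite →
        g (ℓ, d) ≤ {C | IsCircuit M C ∧ C.ncard = ℓ}.ncard →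
        ∃ 𝒟 : Finset (Set α), 𝒟.card = d ∧ (∀ C ∈ 𝒟, IsCircuit M C) ∧
          ∀ C ∈ 𝒟, ∀ C' ∈ 𝒟, C ≠ C' → Disjoint C C' := by
  refine ⟨fun p ↦ Matroid.circuitPackingBound p.1 p.2, fun ℓ d _ _ α M hE hcard ↦ ?_⟩
  simp only [isCircuit_iff_matroid_isCircuit] at hcard ⊢
  have hfin : {C | M.IsCircuit C ∧ C.ncard = ℓ}.Finite :=
    hE.finite_subsets.subset fun C hC ↦ hC.1.subset_ground
  obtain ⟨𝒟, h𝒟card, h𝒟, h𝒟disj⟩ := Matroid.exists_pairwiseDisjoint_isCircuits ℓ d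
    (F := hfin.toFinset) (fun C hC ↦ (hfin.mem_toFinset.mp hC).1)
    (fun C hC ↦ by
      obtain ⟨hC, hCℓ⟩ := hfin.mem_toFinset.mp hC
      exact hCℓ ▸ (hE.subset hC.subset_ground).cast_ncard_eq.ge)
    (by rwa [← ncard_eq_toFinset_card _ hfin])
  exact ⟨𝒟, h𝒟card, h𝒟, fun C hC C' hC' hne ↦ h𝒟disj hC hC' hne⟩
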